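/- arXiv:0901.3985 — 2 statements merged into one kernel-verified Lean document; each statement's English description precedes it below -/
import Mathlib

section
/- Let n ≥ 5, suppose c_1, c_2, …, c_n are all nonzero, and let z ∈ ℝⁿ. Define x ∈ ℝⁿ by x_n = z_n/c_n, x_{n−1} = (z_{n−1} − e_{n−1}·x_n)/c_{n−1}, x_i = (z_i − e_i·x_{i+1} − ã'_i·x_{i+2})/c_i for i = n−2, n−3, …, 2 (where ã'_2 = ẽ and ã'_i = ã_i for i ≥ 3), and x_1 = (z_1 − e_1·x_2 − ã_1·x_3 − s·x_4)/c_1. Then U·x = z, where U is the n×n upper triangular matrix with U_{i,i} = c_i for i = 1,…,n, U_{i,i+1} = e_i for i = 1,…,n−1, U_{1,3} = ã_1, U_{2,4} = ẽ, U_{i,i+2} = ã_i for i = 3,…,n−2, U_{1,4} = s, and all other entries zero. -/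
open Matrix Finset

/-- The `n × n` nearly pentadiagonal matrix with diagonals `d` (main), `a` (first super),
`ta` (second super), `b` (first sub), `tb` (second sub), together with the extra corner
entries `A 1 4 = s` and `A n (n-3) = t` (1-based indexing). -/
noncomputable def nearlyPenta (n : ℕ) (d a ta b tb : ℕ → ℝ) (s t : ℝ) :
    Matrix (Fin n) (Fin n) ℝ :=
  Matrix.of fun i j =>
    let I := (i : ℕ) + 1
    let J := (j : ℕ) + 1
    if I = J then d I
    else if J = I + 1 then a I
    else if J = I + 2 then ta I
    else if I = J + 1 then b I
    else if I = J + 2 then tb I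
    else if I = 1 ∧ J = 4 then s
    else if I = n ∧ J = n - 3 then t
    else 0

/-- The unit lower triangular factor `L`:  `L i i = 1`, `L (i+1) i = f (i+1)`,
`L (i+2) i = tb (i+2) / c i` for `i = 1,…,n-3`, `L n (n-3) = t / c (n-3)`,
`L n (n-2) = g`, `L n (n-1) = f n` (1-based indexing). -/
noncomputable def matL (n : ℕ) (c f tb : ℕ → ℝ) (t g : ℝ) :
    Matrix (Fin n) (Fin n) ℝ :=
  Matrix.of fun i j =>
    let I := (i : ℕ) + 1
    let J := (j : ℕ) + 1
    if I = J then 1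
    else if I = J + 1 then f I
    else if I = J + 2 ∧ I ≠ n then tb I / c J
    else if I = n ∧ J = n - 2 then g
    else if I = n ∧ J = n - 3 then t / c (n - 3)
    else 0

/-- The upper triangular factor `U`:  `U i i = c i`, `U i (i+1) = e i`,
`U 1 3 = ta 1`, `U 2 4 = et`, `U i (i+2) = ta i` for `i = 3,…,n-2`, and
`U 1 4 = s` (1-based indexing). -/
noncomputable def matU (n : ℕ) (c e ta : ℕ → ℝ) (et s : ℝ) :
    Matrix (Fin n) (Fin n) ℝ :=
  Matrix.of fun i j =>
    let I := (i : ℕ) + 1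
    let J := (j : ℕ) + 1
    if I = J then c I
    else if J = I + 1 then e I
    else if J = I + 2 then (if I = 1 then ta 1 else if I = 2 then et else ta I)
    else if I = 1 ∧ J = 4 then s
    else 0

theorem Fin.sum_ite_val_eq_mul {R : Type*} [CommSemiring R] (n m : ℕ) (v : R) (y : ℕ → R) :
    ∑ j : Fin n, (if (j : ℕ) = m then v else 0) * y (j + 1) =
      if m < n then v * y (m + 1) else 0 := by
  simp_rw [ite_mul, zero_mul]
  rw [Fin.sum_univ_eq_sum_range (fun j => if j = m then v * y (j + 1) else 0), sum_ite_eq']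
  simp only [mem_range]

/-- The paper's `ã'`: entry `(I, I + 2)` of `matU` for `I ≥ 2`, also correct at `I = 1`. -/
def matUSecondSuperdiag (ta : ℕ → ℝ) (et : ℝ) (I : ℕ) : ℝ :=
  if I = 2 then et else ta I

theorem matU_apply_eq (n : ℕ) (c e ta : ℕ → ℝ) (et s : ℝ) (i j : Fin n) :
    matU n c e ta et s i j =
      (if (j : ℕ) = i then c (i + 1) else 0) +
      (if (j : ℕ) = i + 1 then e (i + 1) else 0) +
      (if (j : ℕ) = i + 2 then matUSecondSuperdiag ta et (i + 1) else 0) +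
      (if (j : ℕ) = 3 then (if (i : ℕ) = 0 then s else 0) else 0) := by
  simp only [matU, matUSecondSuperdiag, Matrix.of_apply]
  split_ifs <;> first | omega | simp_all

theorem matU_mulVec_apply (n : ℕ) (c e ta : ℕ → ℝ) (et s : ℝ) (x : ℕ → ℝ) (i : Fin n) :
    (matU n c e ta et s *ᵥ fun j : Fin n => x ((j : ℕ) + 1)) i =
      c (i + 1) * x (i + 1) +
      (if (i : ℕ) + 1 < n then e (i + 1) * x (i + 2) else 0) +
      (if (i : ℕ) + 2 < n then matUSecondSuperdiag ta et (i + 1) * x (i + 3) else 0) +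
      (if 3 < n then (if (i : ℕ) = 0 then s else 0) * x 4 else 0) := by
  simp only [mulVec, dotProduct, matU_apply_eq, add_mul, sum_add_distrib,
    Fin.sum_ite_val_eq_mul, if_pos i.isLt]

theorem matU_back_substitution_general (n : ℕ) (hn : 5 ≤ n)
    (ta : ℕ → ℝ) (s : ℝ)
    (c e : ℕ → ℝ) (et : ℝ)
    (hcne : ∀ i, 1 ≤ i → i ≤ n → c i ≠ 0)
    (z x : ℕ → ℝ)
    (hxn : x n = z n / c n)
    (hxn1 : x (n - 1) = (z (n - 1) - e (n - 1) * x n) / c (n - 1))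
    (hx : ∀ i, 2 ≤ i → i ≤ n - 2 →
      x i = (z i - e i * x (i + 1) - (if i = 2 then et else ta i) * x (i + 2)) / c i)
    (hx1 : x 1 = (z 1 - e 1 * x 2 - ta 1 * x 3 - s * x 4) / c 1) :
    (matU n c e ta et s).mulVec (fun i : Fin n => x ((i : ℕ) + 1)) =
      fun i : Fin n => z ((i : ℕ) + 1) := by
  funext ⟨k, hk⟩
  rw [matU_mulVec_apply]
  dsimp only
  have hc : c (k + 1) ≠ 0 := hcne (k + 1) (by omega) (by omega)
  obtain rfl | rfl | rfl | ⟨hk1, hk3⟩ :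
      k = 0 ∨ n = k + 1 ∨ n = k + 2 ∨ (1 ≤ k ∧ k + 3 ≤ n) := by omega
  · simp (disch := omega) only [if_pos, if_true, matUSecondSuperdiag, if_neg]
    linear_combination (eq_div_iff hc).mp hx1
  · simp (disch := omega) only [if_neg, zero_mul, add_zero, ite_self]
    rw [hxn, mul_div_cancel₀ _ hc]
  · rw [show k + 2 - 1 = k + 1 by omega] at hxn1
    simp (disch := omega) only [if_pos, if_neg, zero_mul, add_zero]
    linear_combination (eq_div_iff hc).mp hxn1
  · simp (disch := omega) only [if_pos, if_neg, zero_mul, add_zero, matUSecondSuperdiag]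
    linear_combination (eq_div_iff hc).mp (hx (k + 1) (by omega) (by omega))

theorem matU_back_substitution (n : ℕ) (hn : 5 ≤ n)
    (d a ta b tb : ℕ → ℝ) (s t : ℝ)
    (c e f : ℕ → ℝ) (et g : ℝ)
    (hc1 : c 1 = d 1) (he1 : e 1 = a 1)
    (hf2 : f 2 = b 2 / c 1)
    (hc2 : c 2 = d 2 - f 2 * e 1)
    (he2 : e 2 = a 2 - f 2 * ta 1)
    (het : et = ta 2 - f 2 * s)
    (hf : ∀ i, 3 ≤ i → i ≤ n - 1 →
      f i = (b i - tb i / c (i - 2) * e (i - 2)) / c (i - 1))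
    (hc3 : c 3 = d 3 - f 3 * e 2 - tb 3 / c 1 * ta 1)
    (he3 : e 3 = a 3 - f 3 * et - tb 3 / c 1 * s)
    (hc4 : c 4 = d 4 - f 4 * e 3 - tb 4 / c 2 * et)
    (hc : ∀ i, 5 ≤ i → i ≤ n - 1 →
      c i = d i - f i * e (i - 1) - tb i / c (i - 2) * ta (i - 2))
    (he : ∀ i, 4 ≤ i → i ≤ n - 1 → e i = a i - f i * ta (i - 1))
    (hg : g = (tb n - t / c (n - 3) * e (n - 3)) / c (n - 2))
    (hfn : f n = (b n - t / c (n - 3) * ta (n - 3) - g * e (n - 2)) / c (n - 1))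
    (hcn : c n = d n - g * ta (n - 2) - f n * e (n - 1))
    (hcne : ∀ i, 1 ≤ i → i ≤ n → c i ≠ 0)
    (z x : ℕ → ℝ)
    (hxn : x n = z n / c n)
    (hxn1 : x (n - 1) = (z (n - 1) - e (n - 1) * x n) / c (n - 1))
    (hx : ∀ i, 2 ≤ i → i ≤ n - 2 →
      x i = (z i - e i * x (i + 1) - (if i = 2 then et else ta i) * x (i + 2)) / c i)
    (hx1 : x 1 = (z 1 - e 1 * x 2 - ta 1 * x 3 - s * x 4) / c 1) :
    (matU n c e ta et s).mulVec (fun i : Fin n => x ((i : ℕ) + 1)) =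
      fun i : Fin n => z ((i : ℕ) + 1) :=
  matU_back_substitution_general n hn ta s c e et hcne z x hxn hxn1 hx hx1
end

section
/- Let n ≥ 5 and suppose c_1, c_2, …, c_{n−1} are all nonzero. Then for every k with 4 ≤ k ≤ n−1, the determinant of the leading principal k×k submatrix of A equals the product c_1·c_2·⋯·c_k. -/
/-!
The recursion for `c`, `e`, `f`, `et` is Doolittle's elimination: it says exactly that every row
of `A` except the last (the only one involving the corner entry `t`) is the corresponding row of
`L * U`, where `L = matL` is unit lower triangular and `U = matU` is upper triangular with
diagonal `c`. Because `L` is lower triangular, the leading `k × k` block of `L * U` is the product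
of the leading blocks of `L` and `U`, so for `k ≤ n - 1` its determinant is `c 1 * ⋯ * c k`.
-/

open Matrix Finset

namespace Matrix

variable {R : Type*} [CommRing R] {n k : ℕ}

theorem submatrix_castLE_mul_of_isLowerTriangular {L : Matrix (Fin n) (Fin n) R}
    (hL : L.IsLowerTriangular) (U : Matrix (Fin n) (Fin n) R) (h : k ≤ n) :
    (L * U).submatrix (Fin.castLE h) (Fin.castLE h) =
      L.submatrix (Fin.castLE h) (Fin.castLE h) * U.submatrix (Fin.castLE h) (Fin.castLE h) := by
  ext i j
  refine (Fintype.sum_of_injective (Fin.castLE h) (Fin.castLE_injective h) _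
    (fun l => L (i.castLE h) l * U l (j.castLE h)) (fun l hl => ?_) fun _ => rfl).symm
  have hil : i.castLE h < l := by
    by_contra! hli
    exact hl ⟨⟨l, Nat.lt_of_le_of_lt hli i.isLt⟩, rfl⟩
  rw [@hL (i.castLE h) l hil, zero_mul]

theorem det_submatrix_castLE_mul {L U : Matrix (Fin n) (Fin n) R} (hL : L.IsLowerTriangular)
    (hL1 : ∀ i, L i i = 1) (hU : U.IsUpperTriangular) (h : k ≤ n) :
    ((L * U).submatrix (Fin.castLE h) (Fin.castLE h)).det =
      ∏ i : Fin k, U (i.castLE h) (i.castLE h) := by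
  rw [submatrix_castLE_mul_of_isLowerTriangular hL, det_mul,
    det_of_isLowerTriangular (L.submatrix (Fin.castLE h) (Fin.castLE h)) fun i j hij => hL hij,
    det_of_isUpperTriangular (M := U.submatrix (Fin.castLE h) (Fin.castLE h)) fun i j hij => hU hij]
  simp [hL1]

end Matrix

section matL

variable {n : ℕ} {c f tb : ℕ → ℝ} {t g : ℝ} (M : Matrix (Fin n) (Fin n) ℝ)

theorem matL_isLowerTriangular : (matL n c f tb t g).IsLowerTriangular := by
  intro i j hij
  have : (i : ℕ) < j := hij
  simp only [matL, of_apply]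
  split_ifs <;> first | omega | rfl

theorem matL_apply_self (i : Fin n) : matL n c f tb t g i i = 1 := by
  simp [matL]

theorem matL_mul_apply_zero (h : 0 < n) (j : Fin n) :
    (matL n c f tb t g * M) ⟨0, h⟩ j = M ⟨0, h⟩ j := by
  rw [mul_apply, Fintype.sum_eq_single ⟨0, h⟩ fun l hl => ?_]
  · simp [matL]
  · have : (l : ℕ) ≠ 0 := fun h0 => hl (Fin.ext h0)
    simp only [matL, of_apply]
    split_ifs <;> first | omega | simp

theorem matL_mul_apply_one (h : 1 < n) (j : Fin n) :
    (matL n c f tb t g * M) ⟨1, h⟩ j = M ⟨1, h⟩ j + f 2 * M ⟨0, by omega⟩ j := by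
  rw [mul_apply,
    Fintype.sum_eq_add ⟨1, h⟩ ⟨0, by omega⟩ (by simp [Fin.ext_iff]) fun l hl => ?_]
  · simp [matL]
  · have : (l : ℕ) ≠ 0 ∧ (l : ℕ) ≠ 1 :=
      ⟨fun h0 => hl.2 (Fin.ext h0), fun h1 => hl.1 (Fin.ext h1)⟩
    simp only [matL, of_apply]
    split_ifs <;> first | omega | simp

theorem matL_row_add_two (q : ℕ) (h : q + 3 < n) :
    matL n c f tb t g ⟨q + 2, by omega⟩ = Pi.single ⟨q + 2, by omega⟩ 1 +
      Pi.single ⟨q + 1, by omega⟩ (f (q + 3)) +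
        Pi.single ⟨q, by omega⟩ (tb (q + 3) / c (q + 1)) := by
  ext l
  simp only [matL, of_apply, Pi.add_apply, Pi.single_apply, Fin.ext_iff]
  split_ifs <;> first | omega | simp [*]

theorem matL_mul_apply_add_two (q : ℕ) (h : q + 3 < n) (j : Fin n) :
    (matL n c f tb t g * M) ⟨q + 2, by omega⟩ j = M ⟨q + 2, by omega⟩ j +
      f (q + 3) * M ⟨q + 1, by omega⟩ j + tb (q + 3) / c (q + 1) * M ⟨q, by omega⟩ j := by
  simp [mul_apply', matL_row_add_two q h, add_dotProduct, single_dotProduct]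

end matL

section factorization

variable {n : ℕ} {d a ta b tb : ℕ → ℝ} {s t : ℝ} {c e f : ℕ → ℝ} {et : ℝ}

theorem matU_isUpperTriangular : (matU n c e ta et s).IsUpperTriangular := by
  intro i j hij
  have : (j : ℕ) < i := hij
  simp only [matU, of_apply]
  split_ifs <;> first | omega | rfl

theorem matU_apply_self (i : Fin n) : matU n c e ta et s i i = c (i + 1) := by
  simp [matU]

theorem nearlyPenta_apply_zero (h : 0 < n) (j : Fin n) (hc1 : c 1 = d 1) (he1 : e 1 = a 1) :
    nearlyPenta n d a ta b tb s t ⟨0, h⟩ j = matU n c e ta et s ⟨0, h⟩ j := by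
  obtain ⟨j, hj⟩ := j
  obtain rfl | rfl | rfl | rfl | hj' : j = 0 ∨ j = 1 ∨ j = 2 ∨ j = 3 ∨ 3 < j := by omega
  all_goals simp only [nearlyPenta, matU, of_apply]
  all_goals simp (disch := omega) only [if_neg, ↓reduceIte, Nat.reduceAdd]
  all_goals simp [hc1, he1]

theorem nearlyPenta_apply_one (h : 1 < n) (j : Fin n) (hc1 : c 1 ≠ 0)
    (hf2 : f 2 = b 2 / c 1) (hc2 : c 2 = d 2 - f 2 * e 1) (he2 : e 2 = a 2 - f 2 * ta 1)
    (het : et = ta 2 - f 2 * s) :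
    nearlyPenta n d a ta b tb s t ⟨1, h⟩ j =
      matU n c e ta et s ⟨1, h⟩ j + f 2 * matU n c e ta et s ⟨0, by omega⟩ j := by
  have hb : f 2 * c 1 = b 2 := by rw [hf2, div_mul_cancel₀ _ hc1]
  obtain ⟨j, hj⟩ := j
  obtain rfl | rfl | rfl | rfl | hj' : j = 0 ∨ j = 1 ∨ j = 2 ∨ j = 3 ∨ 3 < j := by omega
  all_goals simp only [nearlyPenta, matU, of_apply]
  all_goals simp (disch := omega) only [if_neg, and_self, ↓reduceIte, Nat.reduceAdd]
  all_goals linarith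

/-- Rows `2`, `3` and `≥ 4` (0-based) differ only in the entries of `U` at `(q, q + 2)`,
`(q + 1, q + 3)` and `(q, q + 3)`; keeping these as entries of `matU` treats all three at once. -/
theorem nearlyPenta_apply_add_two (q : ℕ) (h : q + 3 < n) (j : Fin n)
    (hc₁ : c (q + 1) ≠ 0) (hc₂ : c (q + 2) ≠ 0)
    (hf : f (q + 3) = (b (q + 3) - tb (q + 3) / c (q + 1) * e (q + 1)) / c (q + 2))
    (hc : c (q + 3) = d (q + 3) - f (q + 3) * e (q + 2) -
      tb (q + 3) / c (q + 1) * matU n c e ta et s ⟨q, by omega⟩ ⟨q + 2, by omega⟩)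
    (he : e (q + 3) = a (q + 3) -
      f (q + 3) * matU n c e ta et s ⟨q + 1, by omega⟩ ⟨q + 3, h⟩ -
      tb (q + 3) / c (q + 1) * matU n c e ta et s ⟨q, by omega⟩ ⟨q + 3, h⟩) :
    nearlyPenta n d a ta b tb s t ⟨q + 2, by omega⟩ j =
      matU n c e ta et s ⟨q + 2, by omega⟩ j +
      f (q + 3) * matU n c e ta et s ⟨q + 1, by omega⟩ j +
      tb (q + 3) / c (q + 1) * matU n c e ta et s ⟨q, by omega⟩ j := by
  have hb : f (q + 3) * c (q + 2) + tb (q + 3) / c (q + 1) * e (q + 1) = b (q + 3) := by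
    rw [hf, div_mul_cancel₀ _ hc₂]; ring
  have htb : tb (q + 3) / c (q + 1) * c (q + 1) = tb (q + 3) := div_mul_cancel₀ _ hc₁
  obtain ⟨j, hj⟩ := j
  simp only [matU, of_apply] at hc he
  simp (disch := omega) only [if_pos, if_neg, ↓reduceIte, add_assoc, Nat.reduceAdd] at hc he
  obtain rfl | rfl | rfl | rfl | rfl | hj' | hj' :
      j = q ∨ j = q + 1 ∨ j = q + 2 ∨ j = q + 3 ∨ j = q + 4 ∨ j < q ∨ q + 4 < j := by omega
  all_goals simp only [nearlyPenta, matU, of_apply]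
  all_goals simp (disch := omega) only [if_pos, if_neg, ↓reduceIte, add_assoc, Nat.reduceAdd]
  all_goals linarith

theorem nearlyPenta_apply_eq_matL_mul_matU (g : ℝ)
    (hc1 : c 1 = d 1) (he1 : e 1 = a 1)
    (hf2 : f 2 = b 2 / c 1)
    (hc2 : c 2 = d 2 - f 2 * e 1)
    (he2 : e 2 = a 2 - f 2 * ta 1)
    (het : et = ta 2 - f 2 * s)
    (hf : ∀ i, 3 ≤ i → i ≤ n - 1 →
      f i = (b i - tb i / c (i - 2) * e (i - 2)) / c (i - 1))
    (hc3 : c 3 = d 3 - f 3 * e 2 - tb 3 / c 1 * ta 1)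
    (he3 : e 3 = a 3 - f 3 * et - tb 3 / c 1 * s)
    (hc4 : c 4 = d 4 - f 4 * e 3 - tb 4 / c 2 * et)
    (hc : ∀ i, 5 ≤ i → i ≤ n - 1 →
      c i = d i - f i * e (i - 1) - tb i / c (i - 2) * ta (i - 2))
    (he : ∀ i, 4 ≤ i → i ≤ n - 1 → e i = a i - f i * ta (i - 1))
    (hcne : ∀ i, 1 ≤ i → i ≤ n - 1 → c i ≠ 0) (i j : Fin n) (hi : (i : ℕ) + 1 < n) :
    nearlyPenta n d a ta b tb s t i j = (matL n c f tb t g * matU n c e ta et s) i j := by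
  obtain ⟨i, hin⟩ := i
  dsimp only at hi
  obtain rfl | rfl | ⟨q, rfl⟩ : i = 0 ∨ i = 1 ∨ ∃ q, i = q + 2 := by
    rcases i with _ | _ | q <;> simp
  · rw [matL_mul_apply_zero]
    exact nearlyPenta_apply_zero hin j hc1 he1
  · rw [matL_mul_apply_one]
    exact nearlyPenta_apply_one hin j (hcne 1 le_rfl (by omega)) hf2 hc2 he2 het
  rw [matL_mul_apply_add_two _ q (by omega)]
  apply nearlyPenta_apply_add_two q (by omega) j
    (hcne (q + 1) (by omega) (by omega)) (hcne (q + 2) (by omega) (by omega))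
  · simpa using hf (q + 3) (by omega) (by omega)
  · rcases q with _ | _ | q
    · rw [hc3]; simp [matU]
    · rw [hc4]; simp [matU]
    · rw [hc (q + 5) (by omega) (by omega)]; simp [matU]
  · rcases q with _ | _ | q
    · rw [he3]; simp [matU]
    · rw [he 4 le_rfl (by omega)]; simp [matU]
    · rw [he (q + 5) (by omega) (by omega)]; simp [matU]

end factorization

theorem nearlyPenta_leading_principal_minor (n : ℕ)
    (d a ta b tb : ℕ → ℝ) (s t : ℝ)
    (c e f : ℕ → ℝ) (et : ℝ)
    (hc1 : c 1 = d 1) (he1 : e 1 = a 1)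
    (hf2 : f 2 = b 2 / c 1)
    (hc2 : c 2 = d 2 - f 2 * e 1)
    (he2 : e 2 = a 2 - f 2 * ta 1)
    (het : et = ta 2 - f 2 * s)
    (hf : ∀ i, 3 ≤ i → i ≤ n - 1 →
      f i = (b i - tb i / c (i - 2) * e (i - 2)) / c (i - 1))
    (hc3 : c 3 = d 3 - f 3 * e 2 - tb 3 / c 1 * ta 1)
    (he3 : e 3 = a 3 - f 3 * et - tb 3 / c 1 * s)
    (hc4 : c 4 = d 4 - f 4 * e 3 - tb 4 / c 2 * et)
    (hc : ∀ i, 5 ≤ i → i ≤ n - 1 →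
      c i = d i - f i * e (i - 1) - tb i / c (i - 2) * ta (i - 2))
    (he : ∀ i, 4 ≤ i → i ≤ n - 1 → e i = a i - f i * ta (i - 1))
    (hcne : ∀ i, 1 ≤ i → i ≤ n - 1 → c i ≠ 0) :
    ∀ k, 4 ≤ k → ∀ hk : k ≤ n - 1,
      ((nearlyPenta n d a ta b tb s t).submatrix
          (Fin.castLE (show k ≤ n by omega)) (Fin.castLE (show k ≤ n by omega))).det =
        ∏ i ∈ Finset.Icc 1 k, c i := by
  intro k _ hk
  have hkn : k ≤ n := by omega
  have hLU : (nearlyPenta n d a ta b tb s t).submatrix (Fin.castLE hkn) (Fin.castLE hkn) =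
      (matL n c f tb t 0 * matU n c e ta et s).submatrix
        (Fin.castLE hkn) (Fin.castLE hkn) := by
    ext i j
    exact nearlyPenta_apply_eq_matL_mul_matU 0 hc1 he1 hf2 hc2 he2 het hf hc3 he3 hc4 hc he hcne
      _ _ (by rw [Fin.val_castLE]; omega)
  rw [hLU, det_submatrix_castLE_mul matL_isLowerTriangular matL_apply_self matU_isUpperTriangular]
  simp only [matU_apply_self, Fin.val_castLE]
  rw [Fin.prod_univ_eq_prod_range (fun i => c (i + 1)), range_eq_Ico, prod_Ico_add', zero_add,
    Ico_add_one_right_eq_Icc]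
end
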